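/- arXiv:2209.05048 — 3 statements merged into one kernel-verified Lean document; each statement's English description precedes it below -/
import Mathlib

section
/- Let m be a positive integer, x ≥ 0 a real number, and L a natural number with L ≥ 2 m x. Then ∑_{l=L}^∞ x^{⌈l/m⌉} / (⌈l/m⌉)! ≤ 2 m · x^{⌈L/m⌉} / (⌈L/m⌉)!. -/
lemma aux_sum_range_mul_div (m : ℕ) (hm : 0 < m) (n : ℕ) (g : ℕ → ℝ) :
    ∑ k ∈ Finset.range (m * n), g (k / m) = m * ∑ i ∈ Finset.range n, g i := by
  induction n with
  | zero => simp
  | succ n ih =>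
    rw [Nat.mul_succ, Finset.sum_range_add, ih, Finset.sum_range_succ]
    have : ∀ j ∈ Finset.range m, g ((m * n + j) / m) = g n := by
      intro j hj
      rw [Nat.mul_add_div hm, Nat.div_eq_of_lt (Finset.mem_range.mp hj), add_zero]
    rw [Finset.sum_congr rfl this, Finset.sum_const, Finset.card_range]
    simp [nsmul_eq_mul]
    ring

/-- **Tail bound for the exponential series with ceiling-divided indices.**
If `m > 0`, `x ≥ 0` and `L ≥ 2·m·x`, then
`∑_{l = L}^∞ x^{⌈l/m⌉} / ⌈l/m⌉! ≤ 2·m · x^{⌈L/m⌉} / ⌈L/m⌉!`. -/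
theorem tail_exp_series_ceil_le (m : ℕ) (hm : 0 < m) (x : ℝ) (hx : 0 ≤ x) (L : ℕ)
    (h : 2 * (m : ℝ) * x ≤ (L : ℝ)) :
    (∑' k : ℕ,
        x ^ (⌈(((L + k : ℕ) : ℚ)) / (m : ℚ)⌉.toNat) /
          (Nat.factorial (⌈(((L + k : ℕ) : ℚ)) / (m : ℚ)⌉.toNat))) ≤
      2 * (m : ℝ) *
        (x ^ (⌈((L : ℚ)) / (m : ℚ)⌉.toNat) /
          (Nat.factorial (⌈((L : ℚ)) / (m : ℚ)⌉.toNat))) := by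
  have hm' : (0:ℝ) < m := by exact_mod_cast hm
  have hmq : (0:ℚ) < m := by exact_mod_cast hm
  set N : ℕ := (⌈((L : ℚ)) / (m : ℚ)⌉).toNat with hN
  set f : ℕ → ℝ := fun j => x ^ j / (Nat.factorial j) with hf
  set c : ℕ → ℕ := fun l => (⌈((l : ℚ)) / (m : ℚ)⌉).toNat with hc
  have hfnonneg : ∀ j, 0 ≤ f j := by
    intro j
    apply div_nonneg (pow_nonneg hx j)
    positivity
  have hceil_nonneg : (0:ℤ) ≤ ⌈((L : ℚ)) / (m : ℚ)⌉ :=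
    Int.ceil_nonneg (by positivity)
  -- 2x ≤ N
  have hNZ : ((N:ℕ) : ℤ) = ⌈((L : ℚ)) / (m : ℚ)⌉ := by
    rw [hN]; exact Int.toNat_of_nonneg hceil_nonneg
  have hLN : ((L : ℚ)) / (m : ℚ) ≤ (N : ℚ) := by
    have h1 := Int.le_ceil ((L:ℚ)/(m:ℚ))
    rw [← hNZ] at h1
    exact_mod_cast h1
  have hLN' : (L : ℝ) / (m : ℝ) ≤ (N : ℝ) := by
    have h1 := (Rat.cast_le (K := ℝ)).mpr hLN
    push_cast at h1
    exact h1
  have h2x : 2 * x ≤ (N : ℝ) := by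
    refine le_trans ?_ hLN'
    rw [le_div_iff₀ hm']
    linarith
  -- decay of f beyond N
  have hstep : ∀ n : ℕ, f (n + 1) = x / (n + 1) * f n := by
    intro n
    rw [hf]
    simp only
    rw [Nat.factorial_succ, pow_succ]
    push_cast
    field_simp
  have hdecay : ∀ i : ℕ, f (N + i) ≤ (1/2)^i * f N := by
    intro i
    induction i with
    | zero => simp
    | succ i ih =>
      have h1 : f (N + (i+1)) = x / ((N:ℝ) + i + 1) * f (N + i) := by
        have h2 := hstep (N + i)
        rw [show N + (i+1) = (N+i)+1 from rfl, h2]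
        push_cast
        ring_nf
      have hpos : (0:ℝ) < (N:ℝ) + i + 1 := by positivity
      have hx2 : x / ((N:ℝ) + i + 1) ≤ 1/2 := by
        rw [div_le_iff₀ hpos]
        nlinarith [Nat.cast_nonneg (α := ℝ) i]
      calc f (N + (i+1)) = x / ((N:ℝ) + i + 1) * f (N + i) := h1
        _ ≤ (1/2) * f (N + i) := by
            apply mul_le_mul_of_nonneg_right hx2 (hfnonneg _)
        _ ≤ (1/2) * ((1/2)^i * f N) := by
            apply mul_le_mul_of_nonneg_left ih (by norm_num)
        _ = (1/2)^(i+1) * f N := by ring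
  -- ceiling lower bound
  have hceil : ∀ k : ℕ, N + k / m ≤ c (L + k) := by
    intro k
    have hkm : m * (k / m) ≤ k := Nat.mul_div_le k m
    have h1 : ((L : ℚ) + (m * (k / m) : ℕ)) / m ≤ ((L + k : ℕ) : ℚ) / m := by
      gcongr
      push_cast
      have h5 : ((m * (k / m) : ℕ) : ℚ) ≤ (k : ℚ) := by exact_mod_cast hkm
      push_cast at h5
      linarith
    have h2 : ⌈((L : ℚ) + (m * (k / m) : ℕ)) / m⌉ = ⌈((L : ℚ)) / m⌉ + (k / m : ℕ) := by
      have : ((L : ℚ) + (m * (k / m) : ℕ)) / m = (L : ℚ) / m + ((k / m : ℕ) : ℚ) := by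
        push_cast
        field_simp
      rw [this, Int.ceil_add_natCast]
    have h3 : ⌈((L : ℚ)) / m⌉ + (k / m : ℕ) ≤ ⌈((L + k : ℕ) : ℚ) / m⌉ := by
      rw [← h2]
      exact Int.ceil_le_ceil h1
    have h4 : ((⌈((L : ℚ)) / m⌉ + ((k / m : ℕ) : ℤ)).toNat : ℕ) ≤ c (L + k) := by
      exact Int.toNat_le_toNat h3
    rwa [Int.toNat_add hceil_nonneg (Int.natCast_nonneg _), Int.toNat_natCast] at h4
  -- termwise bound
  have hterm : ∀ k : ℕ, f (c (L + k)) ≤ (1/2)^(k / m) * f N := by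
    intro k
    have hck : N ≤ c (L + k) := le_trans (Nat.le_add_right N _) (hceil k)
    have heq : N + (c (L + k) - N) = c (L + k) := Nat.add_sub_cancel' hck
    calc f (c (L + k)) = f (N + (c (L + k) - N)) := by rw [heq]
      _ ≤ (1/2)^(c (L + k) - N) * f N := hdecay _
      _ ≤ (1/2)^(k / m) * f N := by
          apply mul_le_mul_of_nonneg_right _ (hfnonneg N)
          apply pow_le_pow_of_le_one (by norm_num) (by norm_num)
          have := hceil k
          omega
  -- geometric sum bound
  have hgeom : ∀ n : ℕ, ∑ i ∈ Finset.range n, ((1:ℝ)/2)^i ≤ 2 := by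
    intro n
    rw [geom_sum_eq (by norm_num : (1:ℝ)/2 ≠ 1)]
    have h0 : (0:ℝ) ≤ (1/2:ℝ)^n := by positivity
    have h1 : ((1/2:ℝ)^n - 1) / ((1/2:ℝ) - 1) = 2 - 2 * (1/2:ℝ)^n := by ring
    rw [h1]
    linarith
  -- partial sum bound
  have hpartial : ∀ n : ℕ, ∑ k ∈ Finset.range n, f (c (L + k)) ≤ 2 * m * f N := by
    intro n
    calc ∑ k ∈ Finset.range n, f (c (L + k))
        ≤ ∑ k ∈ Finset.range n, (1/2)^(k / m) * f N :=
          Finset.sum_le_sum fun k _ => hterm k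
      _ ≤ ∑ k ∈ Finset.range (m * n), (1/2)^(k / m) * f N := by
          apply Finset.sum_le_sum_of_subset_of_nonneg
          · exact Finset.range_subset_range.mpr (Nat.le_mul_of_pos_left n hm)
          · intro k _ _
            have := hfnonneg N
            positivity
      _ = m * ∑ i ∈ Finset.range n, (1/2)^i * f N :=
          aux_sum_range_mul_div m hm n (fun i => (1/2)^i * f N)
      _ = (∑ i ∈ Finset.range n, ((1:ℝ)/2)^i) * (m * f N) := by
          rw [← Finset.sum_mul]
          ring
      _ ≤ 2 * (m * f N) := by
          apply mul_le_mul_of_nonneg_right (hgeom n)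
          have := hfnonneg N
          positivity
      _ = 2 * m * f N := by ring
  have hsummable : Summable (fun k : ℕ => f (c (L + k))) :=
    summable_of_sum_range_le (fun k => hfnonneg _) hpartial
  have := Summable.tsum_le_of_sum_range_le hsummable hpartial
  exact this
end

section
/- Let κ > 0 and define f(x) = (κ/x)^x for x > 0. Then (i) f is monotonically decreasing on the interval [κ/e, ∞); and (ii) for every η with 0 < η < 1 and every x ≥ e·κ + 4·log(1/η) / log(e + κ^{-1}·log(1/η)), one has f(x) ≤ η. -/
open Real

-- key inequality for part (ii)
lemma key_ineq (κ L : ℝ) (hκ : 0 < κ) (hL : 0 < L) (x : ℝ)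
    (hx : Real.exp 1 * κ + 4 * L / Real.log (Real.exp 1 + κ⁻¹ * L) ≤ x) :
    L ≤ x * Real.log (x / κ) := by
  obtain ⟨D, hD⟩ : ∃ D : ℝ, D = Real.exp 1 + κ⁻¹ * L := ⟨_, rfl⟩
  rw [← hD] at hx
  have hinv : 0 < κ⁻¹ * L := by positivity
  have hDe : Real.exp 1 ≤ D := by rw [hD]; linarith
  have hD1 : (1:ℝ) ≤ Real.log D := by
    have := Real.log_le_log (Real.exp_pos 1) hDe
    rwa [Real.log_exp] at this
  have hDpos : 0 < D := lt_of_lt_of_le (Real.exp_pos 1) hDe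
  have hlogDpos : 0 < Real.log D := lt_of_lt_of_le one_pos hD1
  have hterm : 0 ≤ 4 * L / Real.log D := by positivity
  have heκ : 0 < Real.exp 1 * κ := by positivity
  have hxek : Real.exp 1 * κ ≤ x := by linarith
  have hxpos : 0 < x := lt_of_lt_of_le heκ hxek
  have hxκe : Real.exp 1 ≤ x / κ := (le_div_iff₀ hκ).2 (by linarith [hxek])
  have hlog1 : (1:ℝ) ≤ Real.log (x / κ) := by
    have := Real.log_le_log (Real.exp_pos 1) hxκe
    rwa [Real.log_exp] at this
  by_cases hcase : L ≤ Real.exp 1 * κ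
  · calc L ≤ x := le_trans hcase hxek
      _ = x * 1 := (mul_one x).symm
      _ ≤ x * Real.log (x / κ) := mul_le_mul_of_nonneg_left hlog1 (le_of_lt hxpos)
  · push_neg at hcase
    have hDe2 : 2 * Real.exp 1 < D := by
      have : Real.exp 1 < κ⁻¹ * L := by
        rw [lt_inv_mul_iff₀ hκ]; linarith [hcase]
      rw [hD]; linarith
    have hD4 : D ^ ((1:ℝ)/4) ≤ x / κ := by
      have h34 : Real.log D ≤ 2 * D ^ ((3:ℝ)/4) := by
        have h1 : Real.log D = (4/3 : ℝ) * Real.log (D ^ ((3:ℝ)/4)) := by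
          rw [Real.log_rpow hDpos]; ring
        have h2 : Real.log (D ^ ((3:ℝ)/4)) ≤ D ^ ((3:ℝ)/4) := by
          linarith [Real.log_le_sub_one_of_pos (Real.rpow_pos_of_pos hDpos ((3:ℝ)/4))]
        have h3 : (0:ℝ) ≤ D ^ ((3:ℝ)/4) := le_of_lt (Real.rpow_pos_of_pos hDpos _)
        nlinarith
      have h2D : D ^ ((1:ℝ)/4) ≤ 2 * D / Real.log D := by
        rw [le_div_iff₀ hlogDpos]
        have hmul : D ^ ((1:ℝ)/4) * Real.log D ≤ D ^ ((1:ℝ)/4) * (2 * D ^ ((3:ℝ)/4)) :=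
          mul_le_mul_of_nonneg_left h34 (le_of_lt (Real.rpow_pos_of_pos hDpos _))
        calc D ^ ((1:ℝ)/4) * Real.log D ≤ D ^ ((1:ℝ)/4) * (2 * D ^ ((3:ℝ)/4)) := hmul
          _ = 2 * (D ^ ((1:ℝ)/4) * D ^ ((3:ℝ)/4)) := by ring
          _ = 2 * D := by rw [← Real.rpow_add hDpos]; norm_num
      have hxk : 2 * D / Real.log D ≤ x / κ := by
        have hLD : κ⁻¹ * L = D - Real.exp 1 := by rw [hD]; ring
        have hxk1 : Real.exp 1 + 4 * (D - Real.exp 1) / Real.log D ≤ x / κ := by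
          rw [le_div_iff₀ hκ]
          have heq : (Real.exp 1 + 4 * (D - Real.exp 1) / Real.log D) * κ
              = Real.exp 1 * κ + 4 * L / Real.log D := by
            rw [← hLD]
            field_simp
          linarith [hx, heq.le, heq.ge]
        have hquot : 2 * D / Real.log D ≤ Real.exp 1 + 4 * (D - Real.exp 1) / Real.log D := by
          have h5 : 2 * D / Real.log D ≤ 4 * (D - Real.exp 1) / Real.log D := by
            rw [div_le_div_iff₀ hlogDpos hlogDpos]
            nlinarith [mul_pos (show 0 < 2*D - 4*Real.exp 1 by linarith) hlogDpos]
          linarith [Real.exp_pos 1]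
        linarith [hquot.trans hxk1]
      linarith [h2D.trans hxk]
    have hlog4 : Real.log D / 4 ≤ Real.log (x / κ) := by
      have h6 := Real.log_le_log (Real.rpow_pos_of_pos hDpos _) hD4
      rw [Real.log_rpow hDpos] at h6
      linarith
    have hx4 : 4 * L / Real.log D ≤ x := by linarith
    have hmm := mul_le_mul hx4 hlog4 (by positivity) (le_of_lt hxpos)
    have heq2 : (4 * L / Real.log D) * (Real.log D / 4) = L := by
      field_simp
    linarith

/-- For `κ > 0`, the function `f(x) = (κ/x)^x` is monotonically decreasing on `[κ/e, ∞)`,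
and for every `0 < η < 1` and `x ≥ e·κ + 4·log(1/η)/log(e + κ⁻¹·log(1/η))` one has `f(x) ≤ η`. -/
theorem kappa_div_x_pow_x_bounds (κ : ℝ) (hκ : 0 < κ) :
    AntitoneOn (fun x : ℝ => (κ / x) ^ x) (Set.Ici (κ / Real.exp 1)) ∧
    (∀ η : ℝ, 0 < η → η < 1 → ∀ x : ℝ,
      Real.exp 1 * κ +
          4 * Real.log (1 / η) / Real.log (Real.exp 1 + κ⁻¹ * Real.log (1 / η)) ≤ x →
      (κ / x) ^ x ≤ η) := by
  have hke : 0 < κ / Real.exp 1 := div_pos hκ (Real.exp_pos 1)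
  have hposOn : ∀ x ∈ Set.Ici (κ / Real.exp 1), 0 < x := fun x hx => lt_of_lt_of_le hke hx
  have hrepr : ∀ x ∈ Set.Ici (κ / Real.exp 1),
      (κ / x) ^ x = Real.exp (x * Real.log κ - x * Real.log x) := by
    intro x hx
    have hxpos := hposOn x hx
    rw [Real.rpow_def_of_pos (div_pos hκ hxpos), Real.log_div (ne_of_gt hκ) (ne_of_gt hxpos)]
    ring_nf
  constructor
  · -- part (i)
    have hg : AntitoneOn (fun x : ℝ => x * Real.log κ - x * Real.log x)
        (Set.Ici (κ / Real.exp 1)) := by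
      apply antitoneOn_of_hasDerivWithinAt_nonpos (convex_Ici _)
        (f' := fun x => Real.log κ - (Real.log x + 1))
      · apply ContinuousOn.sub
        · exact (continuous_id.mul continuous_const).continuousOn
        · apply ContinuousOn.mul continuousOn_id
          exact Real.continuousOn_log.mono (fun x hx => ne_of_gt (hposOn x hx))
      · intro x hx
        rw [interior_Ici] at hx
        have hxpos : 0 < x := lt_trans hke hx
        exact ((hasDerivAt_mul_const (Real.log κ)).sub
          (Real.hasDerivAt_mul_log (ne_of_gt hxpos))).hasDerivWithinAt
      · intro x hx
        rw [interior_Ici] at hx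
        have hxpos : 0 < x := lt_trans hke hx
        have : Real.log κ - 1 < Real.log x := by
          have := Real.log_lt_log hke hx
          rwa [Real.log_div (ne_of_gt hκ) (ne_of_gt (Real.exp_pos 1)), Real.log_exp] at this
        linarith
    intro a ha b hb hab
    simp only
    rw [hrepr a ha, hrepr b hb]
    exact Real.exp_le_exp.2 (hg ha hb hab)
  · -- part (ii)
    intro η hη hη1 x hx
    set L := Real.log (1 / η) with hLdef
    have hL : 0 < L := by
      rw [hLdef]
      apply Real.log_pos
      rw [lt_div_iff₀ hη]; linarith
    have hkey := key_ineq κ L hκ hL x hx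
    have hDe : Real.exp 1 ≤ Real.exp 1 + κ⁻¹ * L := by
      have : 0 ≤ κ⁻¹ * L := by positivity
      linarith
    have hlogD : 0 < Real.log (Real.exp 1 + κ⁻¹ * L) := by
      apply lt_of_lt_of_le one_pos
      have := Real.log_le_log (Real.exp_pos 1) hDe
      rwa [Real.log_exp] at this
    have hxek : Real.exp 1 * κ ≤ x := by
      have h0 : 0 ≤ 4 * L / Real.log (Real.exp 1 + κ⁻¹ * L) := by positivity
      linarith
    have hxpos : 0 < x := lt_of_lt_of_le (by positivity) hxek
    rw [Real.rpow_def_of_pos (div_pos hκ hxpos)]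
    have h2 : x * Real.log (κ / x) ≤ -L := by
      have hlogeq : Real.log (κ / x) = - Real.log (x / κ) := by
        rw [← Real.log_inv]
        congr 1
        field_simp
      rw [hlogeq]
      nlinarith [hkey]
    calc Real.exp (Real.log (κ / x) * x) = Real.exp (x * Real.log (κ / x)) := by ring_nf
      _ ≤ Real.exp (-L) := Real.exp_le_exp.2 h2
      _ = η := by
          rw [hLdef, Real.log_div one_ne_zero (ne_of_gt hη), Real.log_one]
          simp [Real.exp_log hη]
end

section
/- (Robust oblivious amplitude amplification.) Let ι be a finite type with a distinguished element i₀, let H be a complex Hilbert space, and let 𝓚 be the Hilbert space of functions ι → H with the ℓ² inner product. For Φ ∈ 𝓚 and v ∈ H write δ_{i₀} v ∈ 𝓚 for the function equal to v at i₀ and 0 elsewhere, and for a bounded operator U on 𝓚 let ⟨0|U|0⟩ : H → H denote v ↦ (U(δ_{i₀} v))(i₀). Let R be the unitary on 𝓚 with (RΦ)(i₀) = Φ(i₀) and (RΦ)(i) = −Φ(i) for i ≠ i₀. Suppose U is a unitary on 𝓚, V is a unitary on H, δ ≥ 0, and ‖⟨0|U|0⟩ v − (1/2) V v‖ ≤ δ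 ‖v‖ for every v ∈ H. Then for every v ∈ H, ‖(−U R U* R U)(δ_{i₀} v) − δ_{i₀}(V v)‖ ≤ 4 δ ‖v‖. -/
set_option synthInstance.maxHeartbeats 1000000
set_option maxHeartbeats 1000000

open scoped InnerProductSpace ComplexConjugate

set_option linter.unusedSectionVars false

noncomputable section

instance piLp_completeSpace {ι : Type*} {β : ι → Type*} [∀ i, UniformSpace (β i)]
    [∀ i, CompleteSpace (β i)] : CompleteSpace (PiLp 2 β) :=
  (PiLp.uniformEquiv 2 β).completeSpace_iff.2 (Pi.complete β)

variable {ι : Type*} [Fintype ι] [DecidableEq ι]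
variable {H : Type*} [NormedAddCommGroup H] [InnerProductSpace ℂ H] [CompleteSpace H]

/-- `δ_{i₀} v ∈ 𝓚`: the function equal to `v` at `i₀` and `0` elsewhere. -/
def deltaVec (i₀ : ι) (v : H) : PiLp 2 (fun _ : ι => H) :=
  (WithLp.equiv 2 (∀ _ : ι, H)).symm (Pi.single i₀ v)

/-- The reflection `R` on `𝓚`: `(RΦ)(i₀) = Φ(i₀)` and `(RΦ)(i) = -Φ(i)` for `i ≠ i₀`. -/
def reflVec (i₀ : ι) (Φ : PiLp 2 (fun _ : ι => H)) : PiLp 2 (fun _ : ι => H) :=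
  (WithLp.equiv 2 (∀ _ : ι, H)).symm (fun i => if i = i₀ then Φ i else -(Φ i))

-- the isometric embedding J
def Jiso (i₀ : ι) : H →ₗᵢ[ℂ] PiLp 2 (fun _ : ι => H) where
  toLinearMap := (WithLp.linearEquiv 2 ℂ (∀ _ : ι, H)).symm.toLinearMap ∘ₗ
    LinearMap.single ℂ (fun _ : ι => H) i₀
  norm_map' v := PiLp.norm_toLp_single 2 (fun _ : ι => H) i₀ v

def Jc (i₀ : ι) : H →L[ℂ] PiLp 2 (fun _ : ι => H) := (Jiso i₀).toContinuousLinearMap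

def Pc (i₀ : ι) : PiLp 2 (fun _ : ι => H) →L[ℂ] H :=
  (ContinuousLinearMap.proj i₀).comp (PiLp.continuousLinearEquiv 2 ℂ (fun _ : ι => H)).toContinuousLinearMap

example (i₀ : ι) (v : H) : Jc i₀ v = deltaVec i₀ v := rfl
example (i₀ : ι) (Φ : PiLp 2 (fun _ : ι => H)) : Pc i₀ Φ = Φ i₀ := rfl

lemma inner_Jc (i₀ : ι) (v : H) (Φ : PiLp 2 (fun _ : ι => H)) :
    ⟪Jc i₀ v, Φ⟫_ℂ = ⟪v, Φ i₀⟫_ℂ := by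
  rw [PiLp.inner_apply]
  have h : (fun j => (⟪(Jc i₀ v) j, Φ j⟫_ℂ)) = fun j => ⟪(Pi.single i₀ v : ∀ _ : ι, H) j, Φ j⟫_ℂ := rfl
  rw [h, Finset.sum_eq_single i₀]
  · simp
  · intro j _ hj; simp [Pi.single_eq_of_ne hj]
  · simp

lemma adjoint_Pc (i₀ : ι) :
    ContinuousLinearMap.adjoint (Pc i₀ : PiLp 2 (fun _ : ι => H) →L[ℂ] H) = Jc i₀ := by
  symm
  rw [ContinuousLinearMap.eq_adjoint_iff]
  intro x y
  rw [inner_Jc]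
  rfl

lemma adjoint_Jc (i₀ : ι) :
    ContinuousLinearMap.adjoint (Jc i₀ : H →L[ℂ] PiLp 2 (fun _ : ι => H)) = Pc i₀ := by
  rw [← adjoint_Pc i₀, ContinuousLinearMap.adjoint_adjoint]

lemma reflVec_eq (i₀ : ι) (Φ : PiLp 2 (fun _ : ι => H)) :
    reflVec i₀ Φ = (2:ℂ) • deltaVec i₀ (Φ i₀) - Φ := by
  apply (WithLp.equiv 2 (∀ _ : ι, H)).injective
  funext i
  simp only [reflVec, deltaVec, WithLp.equiv_apply, WithLp.ofLp_sub, WithLp.ofLp_smul, Equiv.apply_symm_apply,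
    Pi.sub_apply, Pi.smul_apply]
  rcases eq_or_ne i i₀ with rfl | h
  · simp [two_smul]
  · simp [h, Pi.single_eq_of_ne h]

/-- **Robust oblivious amplitude amplification.**
If `U` is a unitary on `𝓚 = ℓ²(ι → H)`, `V` a unitary on `H`, and the `(i₀,i₀)` block of `U`
satisfies `‖⟨0|U|0⟩ v - (1/2) V v‖ ≤ δ ‖v‖` for all `v`, then the amplified operator
`-U R U* R U` satisfies `‖(-U R U* R U)(δ_{i₀} v) - δ_{i₀}(V v)‖ ≤ 4 δ ‖v‖` for all `v`. -/
theorem robust_oblivious_amplitude_amplification (i₀ : ι)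
    (U : (PiLp 2 fun _ : ι => H) →L[ℂ] (PiLp 2 fun _ : ι => H))
    (hU : U ∈ unitary ((PiLp 2 fun _ : ι => H) →L[ℂ] (PiLp 2 fun _ : ι => H)))
    (V : H →L[ℂ] H) (hV : V ∈ unitary (H →L[ℂ] H))
    (δ : ℝ) (hδ : 0 ≤ δ)
    (hblock : ∀ v : H, ‖(U (deltaVec i₀ v)) i₀ - ((1 : ℂ) / 2) • V v‖ ≤ δ * ‖v‖) :
    ∀ v : H,
      ‖-(U (reflVec i₀ ((ContinuousLinearMap.adjoint U) (reflVec i₀ (U (deltaVec i₀ v)))))) -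
          deltaVec i₀ (V v)‖ ≤ 4 * δ * ‖v‖ := by
  intro v
  have hdelta : ∀ w : H, deltaVec i₀ w = Jc i₀ w := fun _ => rfl
  have hJnorm : ∀ x : H, ‖Jc i₀ x‖ = ‖x‖ := fun x => (Jiso i₀).norm_map x
  have hUdU : ∀ x, ContinuousLinearMap.adjoint U (U x) = x := by
    intro x
    have h := Unitary.star_mul_self_of_mem hU
    rw [ContinuousLinearMap.star_eq_adjoint] at h
    calc ContinuousLinearMap.adjoint U (U x) = (ContinuousLinearMap.adjoint U * U) x := rfl
      _ = x := by rw [h]; rfl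
  have hUUd : ∀ x, U (ContinuousLinearMap.adjoint U x) = x := by
    intro x
    have h := Unitary.mul_star_self_of_mem hU
    rw [ContinuousLinearMap.star_eq_adjoint] at h
    calc U (ContinuousLinearMap.adjoint U x) = (U * ContinuousLinearMap.adjoint U) x := rfl
      _ = x := by rw [h]; rfl
  have hVdV : ∀ x, ContinuousLinearMap.adjoint V (V x) = x := by
    intro x
    have h := Unitary.star_mul_self_of_mem hV
    rw [ContinuousLinearMap.star_eq_adjoint] at h
    calc ContinuousLinearMap.adjoint V (V x) = (ContinuousLinearMap.adjoint V * V) x := rfl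
      _ = x := by rw [h]; rfl
  have hUnorm : ∀ x, ‖U x‖ = ‖x‖ := ContinuousLinearMap.norm_map_of_mem_unitary hU
  have hVnorm : ∀ x, ‖V x‖ = ‖x‖ := ContinuousLinearMap.norm_map_of_mem_unitary hV
  set A : H →L[ℂ] H := ((Pc i₀).comp U).comp (Jc i₀) with hA
  set Ad : H →L[ℂ] H := ContinuousLinearMap.adjoint A with hAd
  have hAv : ∀ w : H, A w = (U (Jc i₀ w)) i₀ := fun _ => rfl
  have hAdapp : ∀ w : H, (ContinuousLinearMap.adjoint U (Jc i₀ w)) i₀ = Ad w := by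
    intro w
    rw [hAd, hA, ContinuousLinearMap.adjoint_comp, ContinuousLinearMap.adjoint_comp,
      adjoint_Jc, adjoint_Pc]
    rfl
  set e : H →L[ℂ] H := A - ((1:ℂ)/2) • V with he
  have hev : ∀ w, e w = A w - ((1:ℂ)/2) • V w := fun _ => rfl
  have henorm : ‖e‖ ≤ δ := by
    refine ContinuousLinearMap.opNorm_le_bound e hδ (fun w => ?_)
    exact hblock w
  -- the key exact-norm identity
  have hkey : ∀ w : H, ‖Jc i₀ w - (2:ℂ) • U (Jc i₀ (Ad w))‖ = ‖w‖ := by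
    intro w
    have hinner : ⟪Jc i₀ w, (2:ℂ) • U (Jc i₀ (Ad w))⟫_ℂ = (2:ℂ) * ⟪Ad w, Ad w⟫_ℂ := by
      rw [inner_smul_right, inner_Jc]
      rw [show (U (Jc i₀ (Ad w))) i₀ = A (Ad w) from rfl,
        ← ContinuousLinearMap.adjoint_inner_left A (Ad w) w, ← hAd]
    have hsq : ‖Jc i₀ w - (2:ℂ) • U (Jc i₀ (Ad w))‖ ^ 2 = ‖w‖ ^ 2 := by
      rw [norm_sub_sq (𝕜 := ℂ), hinner, hJnorm, norm_smul, hUnorm, hJnorm, RCLike.mul_re,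
        inner_self_eq_norm_sq, inner_self_im, RCLike.ofNat_re, RCLike.ofNat_im]
      have h2 : ‖(2:ℂ)‖ = 2 := by norm_num
      rw [h2]
      ring
    calc ‖Jc i₀ w - (2:ℂ) • U (Jc i₀ (Ad w))‖
        = Real.sqrt (‖Jc i₀ w - (2:ℂ) • U (Jc i₀ (Ad w))‖ ^ 2) := (Real.sqrt_sq (norm_nonneg _)).symm
      _ = Real.sqrt (‖w‖ ^ 2) := by rw [hsq]
      _ = ‖w‖ := Real.sqrt_sq (norm_nonneg _)
  -- step computations
  have r1 : reflVec i₀ (U (deltaVec i₀ v)) = (2:ℂ) • Jc i₀ (A v) - U (Jc i₀ v) := by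
    rw [reflVec_eq]; rfl
  have r2 : ContinuousLinearMap.adjoint U ((2:ℂ) • Jc i₀ (A v) - U (Jc i₀ v))
      = (2:ℂ) • ContinuousLinearMap.adjoint U (Jc i₀ (A v)) - Jc i₀ v := by
    rw [map_sub, map_smul, hUdU]
  have hproj : ((2:ℂ) • ContinuousLinearMap.adjoint U (Jc i₀ (A v)) - Jc i₀ v) i₀
      = (2:ℂ) • Ad (A v) - v := by
    have h2 : (Jc i₀ v) i₀ = v := by
      show Pi.single (M := fun _ : ι => H) i₀ v i₀ = v
      simp
    show (2:ℂ) • ((ContinuousLinearMap.adjoint U (Jc i₀ (A v))) i₀) - (Jc i₀ v) i₀ = _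
    rw [hAdapp, h2]
  have r3 : reflVec i₀ ((2:ℂ) • ContinuousLinearMap.adjoint U (Jc i₀ (A v)) - Jc i₀ v)
      = (2:ℂ) • Jc i₀ ((2:ℂ) • Ad (A v) - v)
        - ((2:ℂ) • ContinuousLinearMap.adjoint U (Jc i₀ (A v)) - Jc i₀ v) := by
    rw [reflVec_eq, hproj]; rfl
  have hid : -(U (reflVec i₀ ((ContinuousLinearMap.adjoint U) (reflVec i₀ (U (deltaVec i₀ v)))))) -
          deltaVec i₀ (V v)
      = (2:ℂ) • (Jc i₀ (e v) - (2:ℂ) • U (Jc i₀ (Ad (e v))))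
        - (2:ℂ) • U (Jc i₀ (Ad (V v) - ((1:ℂ)/2) • v)) := by
    rw [r1, r2, r3, hdelta]
    have heAd : Ad (e v) = Ad (A v) - ((1:ℂ)/2) • Ad (V v) := by
      rw [hev, map_sub, map_smul]
    rw [heAd, hev]
    simp only [map_sub, map_smul, hUUd, smul_sub, smul_smul]
    module
  rw [hid]
  have hb1 : ‖e v‖ ≤ δ * ‖v‖ :=
    (e.le_opNorm v).trans (mul_le_mul_of_nonneg_right henorm (norm_nonneg v))
  have hb2 : ‖Ad (V v) - ((1:ℂ)/2) • v‖ ≤ δ * ‖v‖ := by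
    have hee : ContinuousLinearMap.adjoint e (V v) = Ad (V v) - ((1:ℂ)/2) • v := by
      have hadj : ContinuousLinearMap.adjoint e
          = Ad - ((1:ℂ)/2) • ContinuousLinearMap.adjoint V := by
        rw [he, map_sub, ← hAd]
        congr 1
        rw [← ContinuousLinearMap.star_eq_adjoint, ← ContinuousLinearMap.star_eq_adjoint,
          star_smul]
        congr 1
        simp [Complex.star_def, map_div₀]
      rw [hadj]
      show Ad (V v) - ((1:ℂ)/2) • (ContinuousLinearMap.adjoint V (V v)) = _
      rw [hVdV]
    rw [← hee]
    calc ‖ContinuousLinearMap.adjoint e (V v)‖ ≤ ‖ContinuousLinearMap.adjoint e‖ * ‖V v‖ :=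
          ContinuousLinearMap.le_opNorm _ _
      _ = ‖e‖ * ‖v‖ := by rw [LinearIsometryEquiv.norm_map ContinuousLinearMap.adjoint e, hVnorm]
      _ ≤ δ * ‖v‖ := mul_le_mul_of_nonneg_right henorm (norm_nonneg v)
  calc ‖(2:ℂ) • (Jc i₀ (e v) - (2:ℂ) • U (Jc i₀ (Ad (e v))))
        - (2:ℂ) • U (Jc i₀ (Ad (V v) - ((1:ℂ)/2) • v))‖
      ≤ ‖(2:ℂ) • (Jc i₀ (e v) - (2:ℂ) • U (Jc i₀ (Ad (e v))))‖
        + ‖(2:ℂ) • U (Jc i₀ (Ad (V v) - ((1:ℂ)/2) • v))‖ := norm_sub_le _ _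
    _ = 2 * ‖e v‖ + 2 * ‖Ad (V v) - ((1:ℂ)/2) • v‖ := by
        rw [norm_smul, norm_smul, hkey (e v), hUnorm, hJnorm]
        norm_num
    _ ≤ 2 * (δ * ‖v‖) + 2 * (δ * ‖v‖) := by
        have := norm_nonneg v
        gcongr
    _ = 4 * δ * ‖v‖ := by ring



end
end
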